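/- arXiv:math/0410442 — 3 statements merged into one kernel-verified Lean document; each statement's English description precedes it below -/
import Mathlib

section
/- Let σ = σ_1 ⊕ σ_2 be a direct sum of strongly convex rational polyhedral cones. Then every extreme ray of σ is an extreme ray of σ_1 or of σ_2. -/
open scoped BigOperators

/-- The cone of nonnegative rational combinations of elements of `S`. -/
def posSpan {n : ℕ} (S : Set (Fin n → ℚ)) : Set (Fin n → ℚ) :=
  {x | ∃ (k : ℕ) (c : Fin k → ℚ) (b : Fin k → (Fin n → ℚ)),
    (∀ i, 0 ≤ c i) ∧ (∀ i, b i ∈ S) ∧ x = ∑ i, c i • b i}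

/-- A rational polyhedral cone: `posSpan` of a finite set. -/
def IsPolyCone {n : ℕ} (σ : Set (Fin n → ℚ)) : Prop :=
  ∃ B : Finset (Fin n → ℚ), σ = posSpan (B : Set (Fin n → ℚ))

/-- A cone is strongly convex if `σ ∩ (-σ) = {0}`. -/
def StronglyConvex {n : ℕ} (σ : Set (Fin n → ℚ)) : Prop :=
  ∀ x, x ∈ σ → -x ∈ σ → x = 0

/-- dot product in `ℚ^n`. -/
def dotQ {n : ℕ} (c x : Fin n → ℚ) : ℚ := ∑ i, c i * x i

/-- `R` is an extreme ray of `σ`: a one-dimensional face cut out by a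
supporting vector `c`. -/
def IsExtremeRay {n : ℕ} (σ R : Set (Fin n → ℚ)) : Prop :=
  ∃ c : Fin n → ℚ, (∀ x ∈ σ, 0 ≤ dotQ c x) ∧
    R = {x ∈ σ | dotQ c x = 0} ∧
    Module.finrank ℚ (Submodule.span ℚ R) = 1

/-- The dimension of a cone: dimension of its rational linear span. -/
noncomputable def coneDim {n : ℕ} (σ : Set (Fin n → ℚ)) : ℕ :=
  Module.finrank ℚ (Submodule.span ℚ σ)

/-- `σ` is the direct sum of `σ₁` and `σ₂` along `a`. -/
def IsDirectSumAlong {n : ℕ} (σ₁ σ₂ σ : Set (Fin n → ℚ)) (a : Fin n → ℚ) : Prop :=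
  a ∈ σ₁ ∩ σ₂ ∧
  Submodule.span ℚ σ₁ ⊓ Submodule.span ℚ σ₂ = Submodule.span ℚ {a} ∧
  σ = posSpan (σ₁ ∪ σ₂)

/-- `σ` is a direct sum of `σ₁` and `σ₂`. -/
def IsDirectSum {n : ℕ} (σ₁ σ₂ σ : Set (Fin n → ℚ)) : Prop :=
  ∃ a, IsDirectSumAlong σ₁ σ₂ σ a

/-- `a` lies on an extreme ray of `σ`. -/
def OnExtremeRay {n : ℕ} (σ : Set (Fin n → ℚ)) (a : Fin n → ℚ) : Prop :=
  ∃ R, IsExtremeRay σ R ∧ a ∈ R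

/-- The ray `ℚ⁺ r`. -/
def rayOf {n : ℕ} (r : Fin n → ℚ) : Set (Fin n → ℚ) :=
  {x | ∃ q : ℚ, 0 ≤ q ∧ x = q • r}

section Aux

variable {n : ℕ}

/-- A set closed under zero, addition and nonnegative scaling. -/
def ClosedCone (T : Set (Fin n → ℚ)) : Prop :=
  (0 : Fin n → ℚ) ∈ T ∧ (∀ x ∈ T, ∀ y ∈ T, x + y ∈ T) ∧
    ∀ q : ℚ, 0 ≤ q → ∀ x ∈ T, q • x ∈ T

lemma subset_posSpan (S : Set (Fin n → ℚ)) : S ⊆ posSpan S := by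
  intro s hs
  exact ⟨1, fun _ => 1, fun _ => s, fun _ => zero_le_one, fun _ => hs, by simp⟩

lemma closedCone_posSpan (S : Set (Fin n → ℚ)) : ClosedCone (posSpan S) := by
  refine ⟨⟨0, fun i => 0, fun i => i.elim0, fun i => le_rfl, fun i => i.elim0, by simp⟩, ?_, ?_⟩
  · rintro x ⟨k, c, b, hc, hb, rfl⟩ y ⟨l, d, e, hd, he, rfl⟩
    refine ⟨k + l, Fin.append c d, Fin.append b e, ?_, ?_, ?_⟩
    · intro i
      refine Fin.addCases (fun j => ?_) (fun j => ?_) i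
      · simpa using hc j
      · simpa using hd j
    · intro i
      refine Fin.addCases (fun j => ?_) (fun j => ?_) i
      · simpa using hb j
      · simpa using he j
    · rw [Fin.sum_univ_add]
      simp [Fin.append_left, Fin.append_right]
  · rintro q hq x ⟨k, c, b, hc, hb, rfl⟩
    refine ⟨k, fun i => q * c i, b, fun i => mul_nonneg hq (hc i), hb, ?_⟩
    rw [Finset.smul_sum]
    exact Finset.sum_congr rfl fun i _ => (mul_smul q (c i) (b i)).symm

lemma sum_mem_of_closed {T : Set (Fin n → ℚ)} (hT : ClosedCone T) :
    ∀ (k : ℕ) (f : Fin k → (Fin n → ℚ)), (∀ i, f i ∈ T) → ∑ i, f i ∈ T := by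
  intro k
  induction k with
  | zero => intro f _; simpa using hT.1
  | succ m ih =>
    intro f hf
    rw [Fin.sum_univ_succ]
    exact hT.2.1 _ (hf 0) _ (ih _ fun i => hf i.succ)

lemma posSpan_subset_of_closed {S T : Set (Fin n → ℚ)} (hST : S ⊆ T) (hT : ClosedCone T) :
    posSpan S ⊆ T := by
  rintro x ⟨k, c, b, hc, hb, rfl⟩
  exact sum_mem_of_closed hT k (fun i => c i • b i)
    (fun i => hT.2.2 (c i) (hc i) (b i) (hST (hb i)))

lemma closedCone_of_poly {σ : Set (Fin n → ℚ)} (h : IsPolyCone σ) : ClosedCone σ := by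
  obtain ⟨B, rfl⟩ := h
  exact closedCone_posSpan _

lemma mem_split {σ₁ σ₂ : Set (Fin n → ℚ)} (h₁ : ClosedCone σ₁) (h₂ : ClosedCone σ₂)
    {x : Fin n → ℚ} (hx : x ∈ posSpan (σ₁ ∪ σ₂)) :
    ∃ p ∈ σ₁, ∃ q ∈ σ₂, x = p + q := by
  refine posSpan_subset_of_closed (T := {x | ∃ p ∈ σ₁, ∃ q ∈ σ₂, x = p + q}) ?_ ?_ hx
  · rintro y (hy | hy)
    · exact ⟨y, hy, 0, h₂.1, (add_zero y).symm⟩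
    · exact ⟨0, h₁.1, y, hy, (zero_add y).symm⟩
  · refine ⟨⟨0, h₁.1, 0, h₂.1, by simp⟩, ?_, ?_⟩
    · rintro x ⟨p, hp, q, hq, rfl⟩ y ⟨p', hp', q', hq', rfl⟩
      exact ⟨p + p', h₁.2.1 _ hp _ hp', q + q', h₂.2.1 _ hq _ hq', by abel⟩
    · rintro t ht x ⟨p, hp, q, hq, rfl⟩
      exact ⟨t • p, h₁.2.2 t ht p hp, t • q, h₂.2.2 t ht q hq, by rw [smul_add]⟩

lemma dotQ_add (c x y : Fin n → ℚ) : dotQ c (x + y) = dotQ c x + dotQ c y := by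
  simp [dotQ, mul_add, Finset.sum_add_distrib]

lemma dotQ_smul (c : Fin n → ℚ) (q : ℚ) (x : Fin n → ℚ) : dotQ c (q • x) = q * dotQ c x := by
  simp [dotQ, Finset.mul_sum]
  exact Finset.sum_congr rfl fun i _ => by ring

lemma stronglyConvex_of_directSum {σ₁ σ₂ σ : Set (Fin n → ℚ)} {a : Fin n → ℚ}
    (h₁ : IsPolyCone σ₁) (h₂ : IsPolyCone σ₂)
    (hs₁ : StronglyConvex σ₁) (hs₂ : StronglyConvex σ₂)
    (hds : IsDirectSumAlong σ₁ σ₂ σ a) : StronglyConvex σ := by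
  obtain ⟨⟨ha₁, ha₂⟩, hspan, hσ⟩ := hds
  have hc₁ := closedCone_of_poly h₁
  have hc₂ := closedCone_of_poly h₂
  intro x hx hnx
  rw [hσ] at hx hnx
  obtain ⟨p₁, hp₁, p₂, hp₂, hx⟩ := mem_split hc₁ hc₂ hx
  obtain ⟨q₁, hq₁, q₂, hq₂, hnx⟩ := mem_split hc₁ hc₂ hnx
  have hsum : (p₁ + q₁) + (p₂ + q₂) = 0 := by
    have h : (p₁ + p₂) + (q₁ + q₂) = 0 := by rw [← hx, ← hnx]; exact add_neg_cancel x
    calc (p₁ + q₁) + (p₂ + q₂) = (p₁ + p₂) + (q₁ + q₂) := by abel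
      _ = 0 := h
  have hneg : p₁ + q₁ = -(p₂ + q₂) := eq_neg_of_add_eq_zero_left hsum
  have hmem : p₁ + q₁ ∈ Submodule.span ℚ σ₁ ⊓ Submodule.span ℚ σ₂ := by
    refine ⟨Submodule.add_mem _ (Submodule.subset_span hp₁) (Submodule.subset_span hq₁), ?_⟩
    rw [hneg]
    exact Submodule.neg_mem _
      (Submodule.add_mem _ (Submodule.subset_span hp₂) (Submodule.subset_span hq₂))
  rw [hspan, Submodule.mem_span_singleton] at hmem
  obtain ⟨t, hta⟩ := hmem
  rcases le_or_gt 0 t with ht | ht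
  · -- t • a ∈ σ₂, and p₂+q₂ = -(t • a)
    have h1 : p₂ + q₂ ∈ σ₂ := hc₂.2.1 _ hp₂ _ hq₂
    have h2 : -(p₂ + q₂) ∈ σ₂ := by
      have : -(p₂ + q₂) = t • a := by rw [hta, hneg]
      rw [this]; exact hc₂.2.2 t ht a ha₂
    have h0 : p₂ + q₂ = 0 := hs₂ _ h1 h2
    have hq₂' : q₂ = -p₂ := by
      have := h0; rw [add_eq_zero_iff_eq_neg] at this; rw [this]; abel
    have hp₂0 : p₂ = 0 := hs₂ _ hp₂ (by rw [← hq₂']; exact hq₂)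
    have hq₂0 : q₂ = 0 := by rw [hq₂', hp₂0, neg_zero]
    have hx' : x = p₁ := by rw [hx, hp₂0, add_zero]
    have hnx' : -x = q₁ := by rw [hnx, hq₂0, add_zero]
    exact hs₁ x (hx' ▸ hp₁) (hnx' ▸ hq₁)
  · have h1 : p₁ + q₁ ∈ σ₁ := hc₁.2.1 _ hp₁ _ hq₁
    have h2 : -(p₁ + q₁) ∈ σ₁ := by
      have : -(p₁ + q₁) = (-t) • a := by rw [neg_smul, hta]
      rw [this]; exact hc₁.2.2 (-t) (by linarith) a ha₁
    have h0 : p₁ + q₁ = 0 := hs₁ _ h1 h2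
    have hq₁' : q₁ = -p₁ := by
      have := h0; rw [add_eq_zero_iff_eq_neg] at this; rw [this]; abel
    have hp₁0 : p₁ = 0 := hs₁ _ hp₁ (by rw [← hq₁']; exact hq₁)
    have hq₁0 : q₁ = 0 := by rw [hq₁', hp₁0, neg_zero]
    have hx' : x = p₂ := by rw [hx, hp₁0, zero_add]
    have hnx' : -x = q₂ := by rw [hnx, hq₁0, zero_add]
    exact hs₂ x (hx' ▸ hp₂) (hnx' ▸ hq₂)

lemma ray_transfer {σ τ R : Set (Fin n → ℚ)} {c r : Fin n → ℚ}
    (hτσ : τ ⊆ σ) (hclτ : ClosedCone τ) (hclσ : ClosedCone σ) (hsc : StronglyConvex σ)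
    (hc : ∀ x ∈ σ, 0 ≤ dotQ c x) (hRe : R = {x ∈ σ | dotQ c x = 0})
    (hdim : Module.finrank ℚ (Submodule.span ℚ R) = 1)
    (hrτ : r ∈ τ) (hr0 : r ≠ 0)
    (hmem : ∀ x ∈ R, ∃ t : ℚ, x = t • r) :
    IsExtremeRay τ R := by
  have hRτ : R ⊆ τ := by
    intro x hx
    obtain ⟨t, rfl⟩ := hmem x hx
    rcases le_or_gt 0 t with ht | ht
    · exact hclτ.2.2 t ht r hrτ
    · exfalso
      have hxσ : t • r ∈ σ := by rw [hRe] at hx; exact hx.1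
      have hnx : -(t • r) ∈ σ := by
        rw [← neg_smul]
        exact hclσ.2.2 (-t) (by linarith) r (hτσ hrτ)
      rcases smul_eq_zero.mp (hsc _ hxσ hnx) with h | h
      · exact absurd h (by linarith)
      · exact hr0 h
  refine ⟨c, fun x hx => hc x (hτσ hx), ?_, hdim⟩
  ext x
  constructor
  · intro hx
    exact ⟨hRτ hx, by rw [hRe] at hx; exact hx.2⟩
  · rintro ⟨hxτ, hdx⟩
    rw [hRe]; exact ⟨hτσ hxτ, hdx⟩

end Aux

/-- Every extreme ray of a direct sum of cones is an extreme ray of one of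
the summands. -/
theorem directSum_extremeRay_mem {n : ℕ} (σ₁ σ₂ σ : Set (Fin n → ℚ))
    (h₁ : IsPolyCone σ₁) (h₂ : IsPolyCone σ₂)
    (hs₁ : StronglyConvex σ₁) (hs₂ : StronglyConvex σ₂)
    (hds : IsDirectSum σ₁ σ₂ σ) :
    ∀ R, IsExtremeRay σ R → IsExtremeRay σ₁ R ∨ IsExtremeRay σ₂ R := by
  intro R hR
  obtain ⟨a, hds'⟩ := hds
  have hsc := stronglyConvex_of_directSum h₁ h₂ hs₁ hs₂ hds'
  have hc₁ := closedCone_of_poly h₁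
  have hc₂ := closedCone_of_poly h₂
  obtain ⟨⟨ha₁, ha₂⟩, hspan, hσeq⟩ := hds'
  have hσ₁σ : σ₁ ⊆ σ := by
    rw [hσeq]; exact Set.subset_union_left.trans (subset_posSpan _)
  have hσ₂σ : σ₂ ⊆ σ := by
    rw [hσeq]; exact Set.subset_union_right.trans (subset_posSpan _)
  have hclσ : ClosedCone σ := by rw [hσeq]; exact closedCone_posSpan _
  obtain ⟨c, hc, hRe, hdim⟩ := hR
  have hne : ¬ ∀ x ∈ R, x = (0 : Fin n → ℚ) := by
    intro h
    rw [Submodule.span_eq_bot.mpr h] at hdim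
    simp at hdim
  push_neg at hne
  obtain ⟨r, hrR, hr0⟩ := hne
  have hle : Submodule.span ℚ {r} ≤ Submodule.span ℚ R :=
    Submodule.span_mono (Set.singleton_subset_iff.mpr hrR)
  have hspanR : Submodule.span ℚ ({r} : Set (Fin n → ℚ)) = Submodule.span ℚ R :=
    Submodule.eq_of_le_of_finrank_eq hle (by rw [finrank_span_singleton hr0, hdim])
  have hmem : ∀ x ∈ R, ∃ t : ℚ, x = t • r := by
    intro x hx
    have hx' : x ∈ Submodule.span ℚ ({r} : Set (Fin n → ℚ)) := by
      rw [hspanR]; exact Submodule.subset_span hx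
    obtain ⟨t, ht⟩ := Submodule.mem_span_singleton.mp hx'
    exact ⟨t, ht.symm⟩
  have hrσ : r ∈ σ := by rw [hRe] at hrR; exact hrR.1
  have hrd : dotQ c r = 0 := by rw [hRe] at hrR; exact hrR.2
  obtain ⟨p, hp, q, hq, hrpq⟩ := mem_split hc₁ hc₂ (show r ∈ posSpan (σ₁ ∪ σ₂) by rw [← hσeq]; exact hrσ)
  have hdp : dotQ c p = 0 ∧ dotQ c q = 0 := by
    have h1 : 0 ≤ dotQ c p := hc p (hσ₁σ hp)
    have h2 : 0 ≤ dotQ c q := hc q (hσ₂σ hq)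
    have h3 : dotQ c p + dotQ c q = 0 := by rw [← dotQ_add, ← hrpq, hrd]
    constructor <;> linarith
  have hpR : p ∈ R := by rw [hRe]; exact ⟨hσ₁σ hp, hdp.1⟩
  have hqR : q ∈ R := by rw [hRe]; exact ⟨hσ₂σ hq, hdp.2⟩
  obtain ⟨s, hs⟩ := hmem p hpR
  obtain ⟨u, hu⟩ := hmem q hqR
  have hsu : s + u = 1 := by
    have h : (s + u) • r = (1 : ℚ) • r := by rw [add_smul, one_smul, ← hs, ← hu, ← hrpq]
    have h' : (s + u - 1) • r = 0 := by rw [sub_smul, h, sub_self]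
    rcases smul_eq_zero.mp h' with h'' | h''
    · linarith
    · exact absurd h'' hr0
  rcases lt_or_ge 0 s with hspos | hsle
  · left
    have hrσ₁ : r ∈ σ₁ := by
      have heq : s⁻¹ • p = r := by
        rw [hs, smul_smul, inv_mul_cancel₀ (ne_of_gt hspos), one_smul]
      rw [← heq]; exact hc₁.2.2 s⁻¹ (by positivity) p hp
    exact ray_transfer hσ₁σ hc₁ hclσ hsc hc hRe hdim hrσ₁ hr0 hmem
  · right
    have hupos : 0 < u := by linarith
    have hrσ₂ : r ∈ σ₂ := by
      have heq : u⁻¹ • q = r := by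
        rw [hu, smul_smul, inv_mul_cancel₀ (ne_of_gt hupos), one_smul]
      rw [← heq]; exact hc₂.2.2 u⁻¹ (by positivity) q hq
    exact ray_transfer hσ₂σ hc₂ hclσ hsc hc hRe hdim hrσ₂ hr0 hmem
end

section
/- Let σ = σ_1 ⊕_r σ_2 be a direct sum of external type of strongly convex rational polyhedral cones along r, where Q^+ r is an extreme ray of σ_1 but not of σ_2. Then Q^+ r is not an extreme ray of σ. -/
open scoped BigOperators

lemma posSpan_smul {n : ℕ} (S : Set (Fin n → ℚ)) {x : Fin n → ℚ}
    (hx : x ∈ posSpan S) {q : ℚ} (hq : 0 ≤ q) : q • x ∈ posSpan S := by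
  obtain ⟨k, cc, b, h1, h2, h3⟩ := hx
  exact ⟨k, fun i => q * cc i, b, fun i => mul_nonneg hq (h1 i), h2, by
    rw [h3, Finset.smul_sum]; simp [mul_smul]⟩

lemma mem_posSpan_self {n : ℕ} (S : Set (Fin n → ℚ)) {x : Fin n → ℚ}
    (hx : x ∈ S) : x ∈ posSpan S :=
  ⟨1, fun _ => 1, fun _ => x, fun _ => zero_le_one, fun _ => hx, by simp⟩

/-- In an external-type direct sum along `r` where `ℚ⁺r` is an extreme ray of
`σ₁` but not of `σ₂`, the ray `ℚ⁺r` is not an extreme ray of the sum. -/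
theorem directSum_external_ray_not_extreme {n : ℕ} (σ₁ σ₂ σ : Set (Fin n → ℚ))
    (h₁ : IsPolyCone σ₁) (h₂ : IsPolyCone σ₂)
    (hs₁ : StronglyConvex σ₁) (hs₂ : StronglyConvex σ₂)
    (r : Fin n → ℚ) (hds : IsDirectSumAlong σ₁ σ₂ σ r)
    (hr₁ : IsExtremeRay σ₁ (rayOf r)) (hr₂ : ¬ IsExtremeRay σ₂ (rayOf r)) :
    ¬ IsExtremeRay σ (rayOf r) := by
  rintro ⟨c, hcnn, hReq, hrank⟩
  obtain ⟨⟨hr1, hr2⟩, hspan, hσ⟩ := hds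
  obtain ⟨B₂, hB₂⟩ := h₂
  have hsub : σ₂ ⊆ σ := fun x hx => hσ ▸ mem_posSpan_self _ (Or.inr hx)
  apply hr₂
  refine ⟨c, fun x hx => hcnn x (hsub hx), ?_, hrank⟩
  ext x
  constructor
  · rintro ⟨q, hq, rfl⟩
    have hxσ₂ : q • r ∈ σ₂ := by
      rw [hB₂] at hr2 ⊢
      exact posSpan_smul _ hr2 hq
    have hx0 : q • r ∈ {x ∈ σ | dotQ c x = 0} := by
      rw [← hReq]; exact ⟨q, hq, rfl⟩
    exact ⟨hxσ₂, hx0.2⟩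
  · rintro ⟨hxσ₂, hx0⟩
    have : x ∈ {x ∈ σ | dotQ c x = 0} := ⟨hsub hxσ₂, hx0⟩
    rw [← hReq] at this
    exact this
end

section
/- Let σ = σ_1 ⊕_r σ_2 be a direct sum of external type where Q^+ r is an extreme ray of both σ_1 and σ_2. Then Q^+ r is an extreme ray of σ. -/
open scoped BigOperators

/-! The supporting functionals `c₁` of `σ₁` and `c₂` of `σ₂` both vanish on `r`, hence agree on
`span σ₁ ⊓ span σ₂ = ℚ r`, so they glue to one linear functional `φ` on `ℚⁿ`. Every `x ∈ σ` splits
as `y + z` with `y ∈ σ₁`, `z ∈ σ₂`, and `φ x = c₁ y + c₂ z` is a sum of two nonnegative terms,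
which vanishes only when `y` and `z` both lie on `ℚ⁺ r`. -/

theorem LinearMap.exists_eqOn_eqOn_of_eqOn_inf {K V W : Type*} [Field K] [AddCommGroup V]
    [Module K V] [AddCommGroup W] [Module K W] {p q : Submodule K V} {f g : V →ₗ[K] W}
    (h : Set.EqOn f g (p ⊓ q : Submodule K V)) :
    ∃ φ : V →ₗ[K] W, Set.EqOn φ f p ∧ Set.EqOn φ g q := by
  let F : V →ₗ.[K] W := ⟨p, f.comp p.subtype⟩
  let G : V →ₗ.[K] W := ⟨q, g.comp q.subtype⟩
  have hFG : ∀ (x : F.domain) (y : G.domain), (x : V) = y → F x = G y := by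
    rintro ⟨x, hx⟩ ⟨y, hy⟩ (rfl : x = y)
    exact h ⟨hx, hy⟩
  obtain ⟨φ, hφ⟩ := (F.sup G hFG).toFun.exists_extend
  have hφ_apply (x : (F.sup G hFG).domain) : φ x = F.sup G hFG x := LinearMap.congr_fun hφ x
  refine ⟨φ, fun x hx => ?_, fun x hx => ?_⟩
  · exact (hφ_apply ⟨x, le_sup_left (b := q) hx⟩).trans
      ((F.left_le_sup G hFG).2 (x := ⟨x, hx⟩) rfl).symm
  · exact (hφ_apply ⟨x, le_sup_right (a := p) hx⟩).trans
      ((F.right_le_sup G hFG).2 (x := ⟨x, hx⟩) rfl).symm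

theorem posSpan_eq_hull {n : ℕ} (S : Set (Fin n → ℚ)) :
    posSpan S = PointedCone.hull ℚ S := by
  ext x
  rw [SetLike.mem_coe, PointedCone.hull, Submodule.mem_span_set']
  constructor
  · rintro ⟨k, c, b, hc, hb, rfl⟩
    exact ⟨k, fun i => ⟨c i, hc i⟩, fun i => ⟨b i, hb i⟩, rfl⟩
  · rintro ⟨k, c, b, rfl⟩
    exact ⟨k, fun i => c i, fun i => b i, fun i => (c i).2, fun i => (b i).2, rfl⟩

theorem IsPolyCone.exists_eq_pointedCone {n : ℕ} {σ : Set (Fin n → ℚ)} (h : IsPolyCone σ) :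
    ∃ C : PointedCone ℚ (Fin n → ℚ), σ = C :=
  let ⟨_, hB⟩ := h
  ⟨_, hB.trans (posSpan_eq_hull _)⟩

theorem posSpan_union_pointedCone {n : ℕ} (C₁ C₂ : PointedCone ℚ (Fin n → ℚ)) :
    posSpan ((C₁ : Set (Fin n → ℚ)) ∪ C₂) = (C₁ ⊔ C₂ : PointedCone ℚ (Fin n → ℚ)) := by
  rw [posSpan_eq_hull, PointedCone.hull, Submodule.span_union, Submodule.span_eq,
    Submodule.span_eq]

theorem dotQ_symm_dotProductEquiv {n : ℕ} (φ : Module.Dual ℚ (Fin n → ℚ)) (x : Fin n → ℚ) :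
    dotQ ((dotProductEquiv ℚ (Fin n)).symm φ) x = φ x :=
  LinearMap.congr_fun ((dotProductEquiv ℚ (Fin n)).apply_symm_apply φ) x

theorem dotProductEquiv_apply_apply_eq_dotQ {n : ℕ} (c x : Fin n → ℚ) :
    dotProductEquiv ℚ (Fin n) c x = dotQ c x :=
  rfl

theorem self_mem_rayOf {n : ℕ} (r : Fin n → ℚ) : r ∈ rayOf r :=
  ⟨1, zero_le_one, (one_smul _ _).symm⟩

theorem add_mem_rayOf {n : ℕ} {r x y : Fin n → ℚ} (hx : x ∈ rayOf r) (hy : y ∈ rayOf r) :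
    x + y ∈ rayOf r := by
  obtain ⟨a, ha, rfl⟩ := hx
  obtain ⟨b, hb, rfl⟩ := hy
  exact ⟨a + b, add_nonneg ha hb, (add_smul a b r).symm⟩

theorem isExtremeRay_sup {n : ℕ} {C₁ C₂ : PointedCone ℚ (Fin n → ℚ)} {r : Fin n → ℚ}
    (hspan : Submodule.span ℚ (C₁ : Set (Fin n → ℚ)) ⊓ Submodule.span ℚ (C₂ : Set (Fin n → ℚ)) =
      Submodule.span ℚ {r})
    (hr₁ : IsExtremeRay C₁ (rayOf r)) (hr₂ : IsExtremeRay C₂ (rayOf r)) :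
    IsExtremeRay (C₁ ⊔ C₂ : PointedCone ℚ (Fin n → ℚ)) (rayOf r) := by
  obtain ⟨c₁, hc₁, hface₁, hdim⟩ := hr₁
  obtain ⟨c₂, hc₂, hface₂, -⟩ := hr₂
  have hc₁r : dotQ c₁ r = 0 := (hface₁ ▸ self_mem_rayOf r).2
  have hc₂r : dotQ c₂ r = 0 := (hface₂ ▸ self_mem_rayOf r).2
  obtain ⟨φ, hφ₁, hφ₂⟩ := LinearMap.exists_eqOn_eqOn_of_eqOn_inf
    (p := Submodule.span ℚ C₁) (q := Submodule.span ℚ C₂)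
    (f := dotProductEquiv ℚ (Fin n) c₁) (g := dotProductEquiv ℚ (Fin n) c₂) <| by
      intro x hx
      rw [SetLike.mem_coe, hspan, Submodule.mem_span_singleton] at hx
      obtain ⟨a, rfl⟩ := hx
      simp only [map_smul, dotProductEquiv_apply_apply_eq_dotQ, hc₁r, hc₂r]
  have hsplit : ∀ x ∈ C₁ ⊔ C₂, ∃ y ∈ C₁, ∃ z ∈ C₂, y + z = x ∧ φ x = dotQ c₁ y + dotQ c₂ z := by
    intro x hx
    obtain ⟨y, hy, z, hz, rfl⟩ := Submodule.mem_sup.1 hx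
    refine ⟨y, hy, z, hz, rfl, ?_⟩
    rw [map_add, hφ₁ (Submodule.subset_span hy), hφ₂ (Submodule.subset_span hz),
      dotProductEquiv_apply_apply_eq_dotQ, dotProductEquiv_apply_apply_eq_dotQ]
  refine ⟨(dotProductEquiv ℚ (Fin n)).symm φ, fun x hx => ?_, ?_, hdim⟩
  · obtain ⟨y, hy, z, hz, -, hφx⟩ := hsplit x hx
    rw [dotQ_symm_dotProductEquiv, hφx]
    exact add_nonneg (hc₁ y hy) (hc₂ z hz)
  · ext x
    simp only [Set.mem_ofPred_eq, dotQ_symm_dotProductEquiv]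
    constructor
    · intro hx
      rw [hface₁] at hx
      refine ⟨Submodule.mem_sup_left hx.1, ?_⟩
      rw [hφ₁ (Submodule.subset_span hx.1)]
      exact hx.2
    · rintro ⟨hx, hφx⟩
      obtain ⟨y, hy, z, hz, rfl, hφyz⟩ := hsplit x hx
      have hy₀ := hc₁ y hy
      have hz₀ := hc₂ z hz
      refine add_mem_rayOf (hface₁ ▸ ⟨hy, ?_⟩) (hface₂ ▸ ⟨hz, ?_⟩) <;> linarith

theorem directSum_external_ray_extreme_general {n : ℕ} (σ₁ σ₂ σ : Set (Fin n → ℚ))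
    (h₁ : IsPolyCone σ₁) (h₂ : IsPolyCone σ₂)
    (r : Fin n → ℚ) (hds : IsDirectSumAlong σ₁ σ₂ σ r)
    (hr₁ : IsExtremeRay σ₁ (rayOf r)) (hr₂ : IsExtremeRay σ₂ (rayOf r)) :
    IsExtremeRay σ (rayOf r) := by
  obtain ⟨-, hspan, rfl⟩ := hds
  obtain ⟨C₁, rfl⟩ := h₁.exists_eq_pointedCone
  obtain ⟨C₂, rfl⟩ := h₂.exists_eq_pointedCone
  rw [posSpan_union_pointedCone]
  exact isExtremeRay_sup hspan hr₁ hr₂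

/-- In an external-type direct sum along `r` where `ℚ⁺r` is an extreme ray of
both summands, the ray `ℚ⁺r` is an extreme ray of the sum. -/
theorem directSum_external_ray_extreme {n : ℕ} (σ₁ σ₂ σ : Set (Fin n → ℚ))
    (h₁ : IsPolyCone σ₁) (h₂ : IsPolyCone σ₂)
    (hs₁ : StronglyConvex σ₁) (hs₂ : StronglyConvex σ₂)
    (r : Fin n → ℚ) (hds : IsDirectSumAlong σ₁ σ₂ σ r)
    (hr₁ : IsExtremeRay σ₁ (rayOf r)) (hr₂ : IsExtremeRay σ₂ (rayOf r)) :
    IsExtremeRay σ (rayOf r) :=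
  directSum_external_ray_extreme_general σ₁ σ₂ σ h₁ h₂ r hds hr₁ hr₂
end
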